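/- arXiv:2506.02269 — 2 statements merged into one kernel-verified Lean document; each statement's English description precedes it below -/
import Mathlib

section
/- Hidden symmetry induced critical points: Let Θ be a finite-dimensional real inner product space, H a group acting on Θ by orthogonal linear maps, L: Θ → ℝ an H-invariant differentiable function, Θ_H the fixed point subspace of H, and Θ̃ ⊆ Θ a linear subspace (not necessarily H-invariant). Suppose (Θ_H^⊥ ∩ Θ̃) + (Θ_H ∩ Θ̃) = Θ̃. Then every critical point of L restricted to Θ̃ ∩ Θ_H is a critical point of L restricted to Θ̃. -/
open scoped RealInnerProductSpace

/-- The fixed point subspace of a group acting by linear isometries. -/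
def fixedSubmodule {H : Type*} [Group H]
    {Θ : Type*} [NormedAddCommGroup Θ] [InnerProductSpace ℝ Θ]
    (ρ : H →* (Θ ≃ₗᵢ[ℝ] Θ)) : Submodule ℝ Θ where
  carrier := {θ | ∀ h : H, ρ h θ = θ}
  zero_mem' := by intro h; simp
  add_mem' := by intro a b ha hb h; simp [map_add, ha h, hb h]
  smul_mem' := by intro c x hx h; simp [map_smul, hx h]

/-- Hidden symmetry induced critical points: Let `H` act by linear
isometries on a finite-dimensional real inner product space `Θ`, let `L` be
`H`-invariant and differentiable, `Θ_H` the fixed point subspace, and `Θ̃` a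
linear subspace. If `(Θ_H^⊥ ⊓ Θ̃) + (Θ_H ⊓ Θ̃) = Θ̃`, then every critical point
of `L` restricted to `Θ̃ ⊓ Θ_H` is a critical point of `L` restricted to `Θ̃`. -/
theorem stmt_5 {H : Type*} [Group H]
    {Θ : Type*} [NormedAddCommGroup Θ] [InnerProductSpace ℝ Θ]
    [FiniteDimensional ℝ Θ]
    (ρ : H →* (Θ ≃ₗᵢ[ℝ] Θ))
    (L : Θ → ℝ) (hL : Differentiable ℝ L)
    (hinv : ∀ (h : H) (θ : Θ), L (ρ h θ) = L θ)
    (Θt : Submodule ℝ Θ)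
    (hcond : ((fixedSubmodule ρ)ᗮ ⊓ Θt) ⊔ (fixedSubmodule ρ ⊓ Θt) = Θt)
    (θstar : Θ) (hmem : θstar ∈ Θt ⊓ fixedSubmodule ρ)
    (hcrit : ∀ w ∈ Θt ⊓ fixedSubmodule ρ, ⟪gradient L θstar, w⟫ = 0) :
    θstar ∈ Θt ∧ ∀ w ∈ Θt, ⟪gradient L θstar, w⟫ = 0 := by
  obtain ⟨hθt, hθfix⟩ := hmem
  refine ⟨hθt, ?_⟩
  -- inner product with gradient is the fderiv
  have hgrad : ∀ w : Θ, ⟪gradient L θstar, w⟫ = fderiv ℝ L θstar w := by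
    intro w
    rw [gradient]
    exact InnerProductSpace.toDual_symm_apply
  -- the derivative at θstar is invariant under ρ h
  have hDinv : ∀ (h : H) (w : Θ), fderiv ℝ L θstar (ρ h w) = fderiv ℝ L θstar w := by
    intro h w
    have hcomp : L ∘ (ρ h) = L := funext fun θ => hinv h θ
    have hd := fderiv_comp θstar (hL (ρ h θstar)) ((ρ h).differentiableAt)
    rw [hcomp, hθfix h, (ρ h).fderiv] at hd
    conv_rhs => rw [hd]
    simp
  -- gradient lies in the fixed subspace
  have hgfix : gradient L θstar ∈ fixedSubmodule ρ := by
    intro h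
    apply ext_inner_right ℝ
    intro w
    have h1 : ⟪(ρ h) (gradient L θstar), (ρ h) ((ρ h).symm w)⟫
        = ⟪gradient L θstar, (ρ h).symm w⟫ := (ρ h).inner_map_map _ _
    rw [(ρ h).apply_symm_apply] at h1
    rw [h1, hgrad, hgrad, ← hDinv h ((ρ h).symm w), (ρ h).apply_symm_apply]
  -- decompose w
  intro w hw
  rw [← hcond] at hw
  obtain ⟨a, ha, b, hb, rfl⟩ := Submodule.mem_sup.mp hw
  rw [inner_add_right]
  have h1 : ⟪gradient L θstar, a⟫ = 0 := by
    exact ha.1 _ hgfix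
  have h2 : ⟪gradient L θstar, b⟫ = 0 := hcrit b ⟨hb.2, hb.1⟩
  rw [h1, h2, add_zero]
end

section
/- Characterization of S_n-equivariant linear maps (DeepSets): A linear map W: ℝⁿ → ℝⁿ satisfies P_σ W = W P_σ for all permutation matrices P_σ (σ ∈ S_n) if and only if W = θ₁ I + θ₂ (𝟏𝟏ᵀ − I) for some scalars θ₁, θ₂, where I is the identity and 𝟏 is the all-ones vector. -/
/-- The `n × n` permutation matrix of `σ`, acting by `(P_σ x)_i = x_{σ⁻¹ i}`. -/
def permMat {n : ℕ} (σ : Equiv.Perm (Fin n)) : Matrix (Fin n) (Fin n) ℝ :=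
  Matrix.of fun i j => if σ j = i then (1 : ℝ) else 0

lemma permMat_mul_apply {n : ℕ} (σ : Equiv.Perm (Fin n)) (W : Matrix (Fin n) (Fin n) ℝ)
    (i j : Fin n) : (permMat σ * W) i j = W (σ.symm i) j := by
  simp only [Matrix.mul_apply, permMat, Matrix.of_apply, ite_mul, one_mul, zero_mul]
  rw [Finset.sum_eq_single (σ.symm i)]
  · simp
  · intro b _ hb
    rw [if_neg]
    intro h
    exact hb (by simp [← h])
  · simp

lemma mul_permMat_apply {n : ℕ} (σ : Equiv.Perm (Fin n)) (W : Matrix (Fin n) (Fin n) ℝ)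
    (i j : Fin n) : (W * permMat σ) i j = W i (σ j) := by
  simp only [Matrix.mul_apply, permMat, Matrix.of_apply, mul_ite, mul_one, mul_zero]
  rw [Finset.sum_eq_single (σ j)]
  · simp
  · intro b _ hb
    rw [if_neg (fun h => hb h.symm)]
  · simp

/-- DeepSets characterization: for `n ≥ 2`, a linear map
`W : ℝⁿ → ℝⁿ` commutes with all permutation matrices iff
`W = θ₁ I + θ₂ (𝟏𝟏ᵀ − I)` for some scalars `θ₁, θ₂`. -/
theorem stmt_9 {n : ℕ} (hn : 2 ≤ n) (W : Matrix (Fin n) (Fin n) ℝ) :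
    (∀ σ : Equiv.Perm (Fin n), permMat σ * W = W * permMat σ) ↔
      ∃ θ₁ θ₂ : ℝ, W = θ₁ • (1 : Matrix (Fin n) (Fin n) ℝ) +
        θ₂ • (Matrix.of (fun _ _ => (1 : ℝ)) - 1) := by
  constructor
  · intro h
    have key : ∀ (σ : Equiv.Perm (Fin n)) i j, W (σ i) (σ j) = W i j := by
      intro σ i j
      have := congrFun (congrFun (h σ) (σ i)) j
      rw [permMat_mul_apply, mul_permMat_apply] at this
      simpa using this.symm
    set e0 : Fin n := ⟨0, by omega⟩
    set e1 : Fin n := ⟨1, by omega⟩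
    have h01 : e0 ≠ e1 := by simp [e0, e1, Fin.ext_iff]
    refine ⟨W e0 e0, W e0 e1, ?_⟩
    ext i j
    simp only [Matrix.add_apply, Matrix.smul_apply, Matrix.sub_apply, Matrix.of_apply,
      Matrix.one_apply, smul_eq_mul]
    by_cases hij : i = j
    · subst hij
      have := key (Equiv.swap e0 i) e0 e0
      rw [Equiv.swap_apply_left] at this
      rw [← this]; simp
    · simp only [if_neg hij]
      -- construct σ with σ e0 = i, σ e1 = j
      set τ : Equiv.Perm (Fin n) := Equiv.swap e0 i
      have hτj : τ.symm j ≠ e0 := by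
        intro hc
        apply hij
        have : j = τ e0 := by rw [← hc]; simp
        rw [this, Equiv.swap_apply_left]
      set σ : Equiv.Perm (Fin n) := τ * Equiv.swap e1 (τ.symm j)
      have hσ0 : σ e0 = i := by
        have : Equiv.swap e1 (τ.symm j) e0 = e0 :=
          Equiv.swap_apply_of_ne_of_ne h01 (Ne.symm hτj)
        simp only [σ, Equiv.Perm.mul_apply, this, τ, Equiv.swap_apply_left]
      have hσ1 : σ e1 = j := by
        show τ (Equiv.swap e1 (τ.symm j) e1) = j
        rw [Equiv.swap_apply_left, Equiv.apply_symm_apply]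
      have := key σ e0 e1
      rw [hσ0, hσ1] at this
      rw [← this]; ring
  · rintro ⟨θ₁, θ₂, rfl⟩ σ
    ext i j
    rw [permMat_mul_apply, mul_permMat_apply]
    simp only [Matrix.add_apply, Matrix.smul_apply, Matrix.sub_apply, Matrix.of_apply,
      Matrix.one_apply, smul_eq_mul]
    have : σ.symm i = j ↔ i = σ j := by
      constructor
      · intro h; rw [← h, Equiv.apply_symm_apply]
      · intro h; rw [h, Equiv.symm_apply_apply]
    by_cases hij : σ.symm i = j
    · rw [if_pos hij, if_pos (this.mp hij)]
    · rw [if_neg hij, if_neg (fun h => hij (this.mpr h))]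
end
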